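/- arXiv:2407.05444 — 4 statements merged into one kernel-verified Lean document; each statement's English description precedes it below -/
import Mathlib

section
/- Let i ≥ 1 be an integer, Q a set, and Y a real vector space. If (f_1,…,f_i) is a compatible family of functions f_k : F_{i,k} × Q → Y, then the inclusion–exclusion extension Φ_i(f_1,…,f_i) is a right inverse of restriction: for every k ∈ {1,…,i}, every x ∈ F_{i,k}, and every q ∈ Q, one has Φ_i(f_1,…,f_i)(x,q) = f_k(x,q). -/
/-- `Fset i k` is the set `F_{i,k} = {x ∈ [0,1)^i : x_k = 0}`. -/
def Fset (i : ℕ) (k : Fin i) : Set (Fin i → ℝ) :=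
  {x | (∀ l, x l ∈ Set.Ico (0 : ℝ) 1) ∧ x k = 0}

/-- `theta S x` replaces each coordinate `x_l` with `l ∈ S` by `0`. -/
def theta {i : ℕ} (S : Finset (Fin i)) (x : Fin i → ℝ) : Fin i → ℝ :=
  fun l => if l ∈ S then 0 else x l

/-- The inclusion–exclusion extension operator
`Φ_i(f₁,…,f_i)(x,q) = Σ_{j=1}^i (−1)^{j−1} Σ_{S ⊆ {1,…,i}, |S| = j} f_{min S}(θ_{i,S}(x,q))`,
written as a single sum over the nonempty subsets `S` of `{1,…,i}`. -/
noncomputable def Phi {Q Y : Type*} [AddCommGroup Y] [Module ℝ Y] {i : ℕ}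
    (f : Fin i → ((Fin i → ℝ) × Q → Y)) (x : Fin i → ℝ) (q : Q) : Y :=
  ∑ S : Finset (Fin i),
    if h : S.Nonempty then ((-1 : ℝ) ^ (S.card - 1)) • f (S.min' h) (theta S x, q)
    else 0

/-- If `(f₁,…,f_i)` is a compatible family, then `Φ_i(f₁,…,f_i)` restricts to `f_k`
on `F_{i,k} × Q` for each `k`. -/
theorem phi_is_right_inverse_of_restriction
    {Q Y : Type*} [AddCommGroup Y] [Module ℝ Y] {i : ℕ} (hi : 1 ≤ i)
    (f : Fin i → ((Fin i → ℝ) × Q → Y))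
    (hcompat : ∀ (k l : Fin i) (x : Fin i → ℝ) (q : Q),
      x ∈ Fset i k → x ∈ Fset i l → f k (x, q) = f l (x, q)) :
    ∀ (k : Fin i) (x : Fin i → ℝ) (q : Q), x ∈ Fset i k →
      Phi f x q = f k (x, q) := by
  intro k x q hx
  obtain ⟨hx1, hxk⟩ := hx
  set g : Finset (Fin i) → Y := fun S =>
    if h : S.Nonempty then ((-1 : ℝ) ^ (S.card - 1)) • f (S.min' h) (theta S x, q)
    else 0 with hg
  -- coordinates of `theta S x` lie in `[0,1)`
  have hIco : ∀ (S : Finset (Fin i)) (l : Fin i), theta S x l ∈ Set.Ico (0 : ℝ) 1 := by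
    intro S l
    by_cases h : l ∈ S <;> simp [theta, h, hx1 l]
  -- the `k`-th coordinate of `theta S x` is always 0
  have hk0 : ∀ S : Finset (Fin i), theta S x k = 0 := by
    intro S
    by_cases h : k ∈ S <;> simp [theta, h, hxk]
  -- every nonempty term equals `(-1)^(|S|-1) • f k (theta S x, q)`
  have hterm : ∀ (S : Finset (Fin i)) (h : S.Nonempty),
      g S = ((-1 : ℝ) ^ (S.card - 1)) • f k (theta S x, q) := by
    intro S h
    have hmem : theta S x ∈ Fset i (S.min' h) :=
      ⟨hIco S, by simp [theta, S.min'_mem h]⟩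
    have hmemk : theta S x ∈ Fset i k := ⟨hIco S, hk0 S⟩
    simp only [hg, dif_pos h]
    rw [hcompat (S.min' h) k _ q hmem hmemk]
  have hins : ∀ T : Finset (Fin i), theta (insert k T) x = theta T x := by
    intro T
    funext l
    by_cases hl : l = k
    · subst hl; simp [theta, hxk]
    · simp [theta, hl]
  have hPhi : Phi f x q = ∑ S ∈ (Finset.univ : Finset (Fin i)).powerset, g S := by
    rw [Finset.powerset_univ]; rfl
  rw [hPhi]
  have huniv : (Finset.univ : Finset (Fin i)) =
      insert k (Finset.univ.erase k) := by
    rw [Finset.insert_erase (Finset.mem_univ k)]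
  rw [huniv, Finset.sum_powerset_insert (Finset.notMem_erase k _),
    ← Finset.sum_add_distrib]
  rw [Finset.sum_eq_single (∅ : Finset (Fin i))]
  · have h1 : g (∅ : Finset (Fin i)) = 0 := by simp [hg]
    have h2 : g (insert k ∅) = f k (x, q) := by
      rw [hterm _ (by simp)]
      have : theta ({k} : Finset (Fin i)) x = x := by
        funext l
        by_cases hl : l = k
        · subst hl; simp [theta, hxk]
        · simp [theta, hl]
      simp [this]
    rw [h1, h2, zero_add]
  · intro T hT hTne
    have hTne' : T.Nonempty := Finset.nonempty_iff_ne_empty.mpr hTne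
    obtain ⟨m, hm⟩ : ∃ m, T.card = m + 1 :=
      ⟨T.card - 1, (Nat.succ_pred_eq_of_pos (Finset.card_pos.mpr hTne')).symm⟩
    have hkT : k ∉ T := fun hkk =>
      Finset.notMem_erase k Finset.univ (Finset.mem_powerset.mp hT hkk)
    have hcard : (insert k T).card = m + 2 := by
      rw [Finset.card_insert_of_notMem hkT, hm]
    rw [hterm T hTne', hterm (insert k T) (Finset.insert_nonempty _ _),
      hins T, hcard, hm, ← add_smul]
    norm_num [pow_succ]
  · intro h
    exact absurd (Finset.empty_mem_powerset _) h
end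

section
/- Let i ≥ 2 be an integer, Q a set, and Y a real vector space. For any functions f_k : F_{i,k} × Q → Y (k = 1,…,i) (no compatibility required), the extension operators satisfy the recursion: for all (x_1,…,x_i) ∈ [0,1)^i and q ∈ Q, Φ_i(f_1,…,f_i)(x_1,…,x_i,q) = Φ_{i−1}(g_1,…,g_{i−1})(x_1,…,x_{i−1},q) + f_i(x_1,…,x_{i−1},0,q) − Φ_{i−1}(h_1,…,h_{i−1})(x_1,…,x_{i−1},q), where for k ∈ {1,…,i−1} the functions g_k, h_k : F_{i−1,k} × Q → Y are defined by g_k(x_1,…,x_{i−1},q) := f_k(x_1,…,x_{i−1},x_i,q) and h_k(x_1,…,x_{i−1},q) := f_k(x_1,…,x_{i−1},0,q). -/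
open Finset

lemma last_not_mem_map {i : ℕ} (T : Finset (Fin i)) :
    Fin.last i ∉ T.map Fin.castSuccEmb := by
  simp only [mem_map]
  rintro ⟨m, -, hm⟩
  exact (Fin.castSucc_lt_last m).ne hm

lemma castSucc_mem_map {i : ℕ} (T : Finset (Fin i)) (m : Fin i) :
    m.castSucc ∈ T.map Fin.castSuccEmb ↔ m ∈ T :=
  Finset.mem_map' _

lemma min'_map_castSucc {i : ℕ} (T : Finset (Fin i)) (h : T.Nonempty) (h' :
    (T.map Fin.castSuccEmb).Nonempty) :
    (T.map Fin.castSuccEmb).min' h' = (T.min' h).castSucc := by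
  apply le_antisymm
  · exact min'_le _ _ (mem_map_of_mem _ (T.min'_mem h))
  · apply le_min'
    intro y hy
    obtain ⟨m, hm, rfl⟩ := mem_map.1 hy
    exact Fin.castSucc_le_castSucc_iff.2 (min'_le _ _ hm)

lemma theta_map_castSucc {i : ℕ} (T : Finset (Fin i)) (x : Fin (i + 1) → ℝ) :
    theta (T.map Fin.castSuccEmb) x
      = Fin.snoc (theta T fun l => x l.castSucc) (x (Fin.last i)) := by
  funext l
  refine Fin.lastCases ?_ (fun m => ?_) l
  · show (if Fin.last i ∈ T.map Fin.castSuccEmb then 0 else x (Fin.last i)) = _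
    rw [Fin.snoc_last, if_neg (last_not_mem_map T)]
  · show (if m.castSucc ∈ T.map Fin.castSuccEmb then 0 else x m.castSucc) = _
    rw [Fin.snoc_castSucc]
    show _ = (if m ∈ T then (0 : ℝ) else x m.castSucc)
    simp only [castSucc_mem_map]

lemma theta_insert_last {i : ℕ} (T : Finset (Fin i)) (x : Fin (i + 1) → ℝ) :
    theta (insert (Fin.last i) (T.map Fin.castSuccEmb)) x
      = Fin.snoc (theta T fun l => x l.castSucc) 0 := by
  funext l
  refine Fin.lastCases ?_ (fun m => ?_) l
  · show (if Fin.last i ∈ insert (Fin.last i) (T.map Fin.castSuccEmb) then (0 : ℝ)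
        else x (Fin.last i)) = _
    rw [Fin.snoc_last, if_pos (Finset.mem_insert_self _ _)]
  · show (if m.castSucc ∈ insert (Fin.last i) (T.map Fin.castSuccEmb) then (0 : ℝ)
        else x m.castSucc) = _
    rw [Fin.snoc_castSucc]
    show _ = (if m ∈ T then (0 : ℝ) else x m.castSucc)
    simp only [Finset.mem_insert, castSucc_mem_map,
      (Fin.castSucc_lt_last m).ne, false_or]

/-- Recursion formula for the extension operators: for `i + 1 ≥ 2` (i.e. `i ≥ 1`) and any
family of functions `f_k : F_{i+1,k} × Q → Y` (no compatibility required),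
`Φ_{i+1}(f₁,…,f_{i+1})(x₁,…,x_{i+1},q)
  = Φ_i(g₁,…,g_i)(x₁,…,x_i,q) + f_{i+1}(x₁,…,x_i,0,q) − Φ_i(h₁,…,h_i)(x₁,…,x_i,q)`,
where `g_k(y,q) := f_k(y, x_{i+1}, q)` and `h_k(y,q) := f_k(y, 0, q)`. -/
theorem phi_recursion {Q Y : Type*} [AddCommGroup Y] [Module ℝ Y] {i : ℕ} (hi : 1 ≤ i)
    (f : Fin (i + 1) → ((Fin (i + 1) → ℝ) × Q → Y))
    (x : Fin (i + 1) → ℝ) (hx : ∀ l, x l ∈ Set.Ico (0 : ℝ) 1) (q : Q) :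
    Phi f x q =
      Phi (fun k (p : (Fin i → ℝ) × Q) => f k.castSucc (Fin.snoc p.1 (x (Fin.last i)), p.2))
          (fun l => x l.castSucc) q
      + f (Fin.last i) (Fin.snoc (fun l => x l.castSucc) 0, q)
      - Phi (fun k (p : (Fin i → ℝ) × Q) => f k.castSucc (Fin.snoc p.1 0, p.2))
          (fun l => x l.castSucc) q := by
  classical
  set F : Finset (Fin (i + 1)) → Y := fun S =>
    if h : S.Nonempty then ((-1 : ℝ) ^ (S.card - 1)) • f (S.min' h) (theta S x, q) else 0 with hF
  set H : Finset (Fin i) → Y := fun T =>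
    if h : T.Nonempty then ((-1 : ℝ) ^ (T.card - 1)) •
      f (T.min' h).castSucc (Fin.snoc (theta T fun l => x l.castSucc) 0, q) else 0 with hH
  have huniv : (univ : Finset (Fin (i + 1)))
      = insert (Fin.last i) (univ.map Fin.castSuccEmb) := by
    ext a
    simp only [mem_univ, true_iff, mem_insert, mem_map]
    rcases eq_or_lt_of_le (Fin.le_last a) with h | h
    · exact Or.inl h
    · exact Or.inr ⟨a.castPred (Fin.ne_last_of_lt h), trivial,
        Fin.castSucc_castPred _ (Fin.ne_last_of_lt h)⟩
  have hps : ((univ.map Fin.castSuccEmb : Finset (Fin (i + 1)))).powerset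
      = (univ.powerset : Finset (Finset (Fin i))).map
          (Finset.mapEmbedding Fin.castSuccEmb).toEmbedding := by
    ext t
    simp only [mem_powerset, mem_map, RelEmbedding.coe_toEmbedding, Finset.mapEmbedding_apply,
      Finset.subset_map_iff]
    constructor
    · rintro ⟨u, hu, rfl⟩; exact ⟨u, hu, rfl⟩
    · rintro ⟨u, hu, rfl⟩; exact ⟨u, hu, rfl⟩
  have key : Phi f x q = (∑ T : Finset (Fin i), F (T.map Fin.castSuccEmb))
      + ∑ T : Finset (Fin i), F (insert (Fin.last i) (T.map Fin.castSuccEmb)) := by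
    rw [Phi, ← Finset.powerset_univ, huniv,
      Finset.sum_powerset_insert (last_not_mem_map _), hps, Finset.sum_map, Finset.sum_map]
    simp only [RelEmbedding.coe_toEmbedding, Finset.mapEmbedding_apply, Finset.powerset_univ, hF]
    rfl
  have part1 : (∑ T : Finset (Fin i), F (T.map Fin.castSuccEmb))
      = Phi (fun k (p : (Fin i → ℝ) × Q) => f k.castSucc (Fin.snoc p.1 (x (Fin.last i)), p.2))
          (fun l => x l.castSucc) q := by
    rw [Phi]
    refine Finset.sum_congr rfl fun T _ => ?_
    by_cases h : T.Nonempty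
    · have h' : (T.map Fin.castSuccEmb).Nonempty := Finset.map_nonempty.2 h
      simp only [hF, dif_pos h', dif_pos h, Finset.card_map, min'_map_castSucc T h h',
        theta_map_castSucc]
    · have h' : ¬ (T.map Fin.castSuccEmb).Nonempty := by
        simp [Finset.map_nonempty, h]
      simp only [hF, dif_neg h', dif_neg h]
  have part2 : (∑ T : Finset (Fin i),
        (F (insert (Fin.last i) (T.map Fin.castSuccEmb)) + H T))
      = f (Fin.last i) (Fin.snoc (fun l => x l.castSucc) 0, q) := by
    rw [Finset.sum_eq_single (∅ : Finset (Fin i))]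
    · have h1 : (insert (Fin.last i) ((∅ : Finset (Fin i)).map Fin.castSuccEmb)).Nonempty :=
        insert_nonempty _ _
      have hmin : (insert (Fin.last i) ((∅ : Finset (Fin i)).map Fin.castSuccEmb)).min' h1
          = Fin.last i := by simp
      have hth := theta_insert_last (∅ : Finset (Fin i)) x
      have hth0 : theta (∅ : Finset (Fin i)) (fun l => x l.castSucc)
          = fun l => x l.castSucc := by funext l; simp [theta]
      rw [hF, hH]
      simp only [dif_pos h1, dif_neg (Finset.not_nonempty_empty), hmin, hth, hth0]
      simp
    · intro T _ hT
      have hTne : T.Nonempty := nonempty_iff_ne_empty.2 hT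
      have h1 : (insert (Fin.last i) (T.map Fin.castSuccEmb)).Nonempty := insert_nonempty _ _
      have h' : (T.map Fin.castSuccEmb).Nonempty := hTne.map
      have hmin : (insert (Fin.last i) (T.map Fin.castSuccEmb)).min' h1
          = (T.min' hTne).castSucc := by
        apply le_antisymm
        · exact min'_le _ _ (mem_insert_of_mem (mem_map_of_mem _ (T.min'_mem hTne)))
        · apply le_min'
          intro y hy
          rcases mem_insert.1 hy with rfl | hy
          · exact (Fin.castSucc_lt_last _).le
          · obtain ⟨m, hm, rfl⟩ := mem_map.1 hy
            exact Fin.castSucc_le_castSucc_iff.2 (min'_le _ _ hm)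
      have hcard : (insert (Fin.last i) (T.map Fin.castSuccEmb)).card = T.card + 1 := by
        rw [Finset.card_insert_of_notMem (last_not_mem_map T), Finset.card_map]
      have hc : T.card + 1 - 1 = (T.card - 1) + 1 := by
        have := hTne.card_pos; omega
      simp only [hF, hH, dif_pos h1, dif_pos hTne, hmin, hcard, theta_insert_last]
      rw [hc, pow_succ, mul_neg_one, neg_smul, neg_add_cancel]
    · intro h; exact absurd (mem_univ _) h
  -- combine
  have hphiH : Phi (fun k (p : (Fin i → ℝ) × Q) => f k.castSucc (Fin.snoc p.1 0, p.2))
      (fun l => x l.castSucc) q = ∑ T : Finset (Fin i), H T := rfl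
  rw [Finset.sum_add_distrib] at part2
  rw [key, part1, hphiH]
  rw [← part2]
  abel
end

section
/- Let n ≥ i ≥ 1 be integers, Y a real normed vector space, m ∈ ℕ ∪ {∞}, and Q := (−1,1)^{n−i} ⊆ ℝ^{n−i}. Identify ℝⁿ = ℝ^i × ℝ^{n−i}. If f_1,…,f_i : ℝⁿ → Y are functions such that f_k is C^m on F_{i,k} × Q (i.e., ContDiffOn ℝ m f_k (F_{i,k} × Q)) for each k, then the function g : ℝⁿ → Y defined by g(x,q) := Σ_{j=1}^{i} (−1)^{j−1} Σ_{S ⊆ {1,…,i}, |S| = j} f_{k(S)}(θ_{i,S}(x,q)) is C^m on [0,1)^i × Q (i.e., ContDiffOn ℝ m g ([0,1)^i × Q)). -/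
/-- The inclusion–exclusion extension of a family of functions which are `C^m` on the sets
`F_{i,k} × Q`, with `Q = (−1,1)^{n−i}`, is `C^m` on `[0,1)^i × Q`.  Here `ℝⁿ` is identified
with `ℝ^i × ℝ^{n−i}`, where `j := n − i ≥ 0` and `i ≥ 1`. -/
theorem phi_contDiffOn {i j : ℕ} (hi : 1 ≤ i)
    {Y : Type*} [NormedAddCommGroup Y] [NormedSpace ℝ Y] (m : ℕ∞)
    (f : Fin i → ((Fin i → ℝ) × (Fin j → ℝ) → Y))
    (hf : ∀ k : Fin i, ContDiffOn ℝ m (f k)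
      ((Fset i k) ×ˢ {q : Fin j → ℝ | ∀ l, q l ∈ Set.Ioo (-1 : ℝ) 1})) :
    ContDiffOn ℝ m
      (fun p : (Fin i → ℝ) × (Fin j → ℝ) =>
        ∑ S : Finset (Fin i),
          if h : S.Nonempty then ((-1 : ℝ) ^ (S.card - 1)) • f (S.min' h) (theta S p.1, p.2)
          else 0)
      ({x : Fin i → ℝ | ∀ l, x l ∈ Set.Ico (0 : ℝ) 1} ×ˢ
        {q : Fin j → ℝ | ∀ l, q l ∈ Set.Ioo (-1 : ℝ) 1}) := by
  apply ContDiffOn.sum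
  intro S _
  by_cases h : S.Nonempty
  · simp only [dif_pos h]
    apply ContDiffOn.const_smul
    have hlin : ContDiff ℝ m (fun p : (Fin i → ℝ) × (Fin j → ℝ) => (theta S p.1, p.2)) := by
      apply ContDiff.prodMk
      · apply contDiff_pi.2
        intro l
        by_cases hl : l ∈ S
        · simpa [theta, hl] using contDiff_const (c := (0 : ℝ))
        · simpa [theta, hl, Function.comp_def] using (contDiff_apply ℝ ℝ l).comp contDiff_fst
      · exact contDiff_snd
    apply (hf (S.min' h)).comp hlin.contDiffOn
    rintro ⟨x, q⟩ ⟨hx, hq⟩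
    refine ⟨⟨fun l => ?_, ?_⟩, hq⟩
    · by_cases hl : l ∈ S
      · simp [theta, hl]
      · simpa [theta, hl] using hx l
    · simp [theta, S.min'_mem h]
  · simp only [dif_neg h]
    exact contDiffOn_const
end

section
/- Let n ≥ 2 be an integer, M an n-dimensional polytope in ℝ^d, and ℓ an integer with 1 ≤ ℓ ≤ n−1. Let f : ℝ^d → ℝ^d be a function that is smooth on M (ContDiffOn ℝ ⊤ f M) and assume: (a) for every ℓ-dimensional face F of M and every x ∈ F, f(x) ∈ E_x; and (b) for every face N of M of dimension greater than ℓ, f '' N ⊆ span_ℝ (⋃ {f '' F : F an ℓ-dimensional face of M with F ⊆ N}). Then f(x) ∈ E_x for every x ∈ M, i.e., f is a stratified vector field on M. -/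
open Set

variable {E : Type*} [AddCommGroup E] [Module ℝ E]

/-- A polytope is the convex hull of a nonempty finite set. -/
def IsPolytope (M : Set E) : Prop :=
  ∃ S : Set E, S.Finite ∧ S.Nonempty ∧ M = convexHull ℝ S

/-- The dimension of a set: the dimension of its affine span. -/
noncomputable def polyDim (A : Set E) : ℕ :=
  Module.finrank ℝ (affineSpan ℝ A).direction

/-- A face of `M` is a nonempty extreme subset of `M`. -/
def IsFace (M F : Set E) : Prop := F.Nonempty ∧ IsExtreme ℝ M F

/-- A vertex of `M` is a point whose singleton is a face of `M`. -/
def IsVertex (M : Set E) (x : E) : Prop := IsFace M {x}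

/-- An edge of `M` is a one-dimensional face of `M`. -/
def IsEdge (M F : Set E) : Prop := IsFace M F ∧ polyDim F = 1

/-- A polytope is simple if every vertex is contained in exactly `dim M` edges. -/
def IsSimplePolytope (M : Set E) : Prop :=
  IsPolytope M ∧
    ∀ x, IsVertex M x → {F : Set E | IsEdge M F ∧ x ∈ F}.ncard = polyDim M

/-- The smallest face of `M` containing `x`: the intersection of all faces containing `x`. -/
def smallestFace (M : Set E) (x : E) : Set E :=
  ⋂₀ {F : Set E | IsFace M F ∧ x ∈ F}

/-- `Edir M x` is the direction of the affine span of the smallest face of `M`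
containing `x`. -/
noncomputable def Edir (M : Set E) (x : E) : Submodule ℝ E :=
  (affineSpan ℝ (smallestFace M x)).direction

section Aux

variable {d : ℕ}

lemma isExtreme_union' {A B C : Set (Fin d → ℝ)} (hB : IsExtreme ℝ A B)
    (hC : IsExtreme ℝ A C) : IsExtreme ℝ A (B ∪ C) := by
  refine ⟨union_subset hB.1 hC.1, fun x₁ h₁ x₂ h₂ x hx ht => ?_⟩
  rcases hx with h | h
  · exact Or.inl (hB.2 h₁ h₂ h ht)
  · exact Or.inr (hC.2 h₁ h₂ h ht)

lemma mem_smallestFace' {M : Set (Fin d → ℝ)} {x : Fin d → ℝ} :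
    x ∈ smallestFace M x :=
  mem_sInter.2 fun _ hF => hF.2

lemma isFace_smallestFace' {M : Set (Fin d → ℝ)} {x : Fin d → ℝ} (hx : x ∈ M) :
    IsFace M (smallestFace M x) := by
  refine ⟨⟨x, mem_smallestFace'⟩, isExtreme_sInter ⟨M, ⟨⟨x, hx⟩, IsExtreme.rfl⟩, hx⟩
    fun B hB => hB.1.2⟩

lemma smallestFace_subset' {M F : Set (Fin d → ℝ)} {x : Fin d → ℝ}
    (hF : IsFace M F) (hx : x ∈ F) : smallestFace M x ⊆ F :=
  sInter_subset_of_mem ⟨hF, hx⟩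

lemma polytope_subset_affineSpan_extremePoints {M : Set (Fin d → ℝ)} (hM : IsPolytope M) :
    M ⊆ (affineSpan ℝ (M.extremePoints ℝ) : Set (Fin d → ℝ)) := by
  obtain ⟨S, hSfin, hSne, rfl⟩ := hM
  have hcomp : IsCompact (convexHull ℝ S) := hSfin.isCompact_convexHull ℝ
  have hconv : Convex ℝ (convexHull ℝ S) := convex_convexHull ℝ S
  have h := closure_convexHull_extremePoints hcomp hconv
  calc convexHull ℝ S = closure (convexHull ℝ ((convexHull ℝ S).extremePoints ℝ)) := h.symm
    _ ⊆ closure (affineSpan ℝ ((convexHull ℝ S).extremePoints ℝ) : Set (Fin d → ℝ)) :=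
        closure_mono (convexHull_min (subset_affineSpan ℝ _)
          (affineSpan ℝ _).convex)
    _ = _ := (affineSpan ℝ _).closed_of_finiteDimensional.closure_eq

/-- Any face can be enlarged (as an extreme set) to one of any prescribed dimension
between its own dimension and that of `M`. -/
lemma exists_face_of_dim {M : Set (Fin d → ℝ)} (hM : IsPolytope M) {F : Set (Fin d → ℝ)}
    (hF : IsFace M F) (m : ℕ) (h1 : polyDim F ≤ m) (h2 : m ≤ polyDim M) :
    ∃ G, IsFace M G ∧ F ⊆ G ∧ polyDim G = m := by
  induction m, h1 using Nat.le_induction with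
  | base => exact ⟨F, hF, subset_rfl, rfl⟩
  | succ m hm IH =>
    obtain ⟨G, hG, hFG, hGdim⟩ := IH (Nat.le_of_succ_le h2)
    have hGne : G.Nonempty := hG.1
    -- find an extreme point of `M` outside the affine span of `G`
    have hw : ∃ w ∈ M.extremePoints ℝ, w ∉ affineSpan ℝ G := by
      by_contra hcon
      push_neg at hcon
      have hsub : M.extremePoints ℝ ⊆ (affineSpan ℝ G : Set (Fin d → ℝ)) := hcon
      have hMsub : M ⊆ (affineSpan ℝ G : Set (Fin d → ℝ)) :=
        (polytope_subset_affineSpan_extremePoints hM).trans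
          ((affineSpan_le).2 hsub)
      have hle : affineSpan ℝ M ≤ affineSpan ℝ G := affineSpan_le.2 hMsub
      have : polyDim M ≤ polyDim G :=
        Submodule.finrank_mono (AffineSubspace.direction_le hle)
      omega
    obtain ⟨w, hwext, hwspan⟩ := hw
    refine ⟨insert w G, ?_, hFG.trans (subset_insert _ _), ?_⟩
    · refine ⟨⟨w, mem_insert _ _⟩, ?_⟩
      have : insert w G = {w} ∪ G := rfl
      rw [this]
      exact isExtreme_union' (isExtreme_singleton.2 hwext) hG.2
    · -- dimension goes up by exactly one
      have hlt : affineSpan ℝ G < affineSpan ℝ (insert w G) := by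
        refine lt_of_le_of_ne (affineSpan_mono ℝ (subset_insert _ _)) fun h => ?_
        exact hwspan (h ▸ subset_affineSpan ℝ _ (mem_insert _ _))
      have hne : ((affineSpan ℝ G : AffineSubspace ℝ (Fin d → ℝ)) : Set (Fin d → ℝ)).Nonempty :=
        hGne.mono (subset_affineSpan ℝ G)
      have hdirlt := AffineSubspace.direction_lt_of_nonempty hlt hne
      have hlow : m < polyDim (insert w G) :=
        hGdim ▸ Submodule.finrank_lt_finrank_of_lt hdirlt
      have hup : polyDim (insert w G) ≤ m + 1 := by
        have h := finrank_vectorSpan_insert_le_set ℝ G w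
        have hG' : Module.finrank ℝ (vectorSpan ℝ G) = m := by
          rw [← direction_affineSpan]; exact hGdim
        show Module.finrank ℝ (affineSpan ℝ (insert w G)).direction ≤ m + 1
        rw [direction_affineSpan, ← hG']; exact h
      omega

end Aux

/-- **Criterion for stratified vector fields** (Lemma 5.5).  Let `M` be an `n`-polytope
in `ℝ^d` with `n ≥ 2` and `1 ≤ ℓ ≤ n − 1`.  If `f` is smooth on `M`, restricts to a
stratified vector field on each `ℓ`-face, and maps each face `N` of dimension `> ℓ` into
the span of its values on the `ℓ`-faces contained in `N`, then `f` is a stratified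
vector field on `M`, i.e. `f x ∈ E_x` for all `x ∈ M`. -/
theorem stratified_criterion {d n : ℕ} (hn : 2 ≤ n)
    {M : Set (Fin d → ℝ)} (hM : IsPolytope M) (hMdim : polyDim M = n)
    {ℓ : ℕ} (hℓ1 : 1 ≤ ℓ) (hℓ2 : ℓ ≤ n - 1)
    {f : (Fin d → ℝ) → (Fin d → ℝ)} (hf : ContDiffOn ℝ (⊤ : ℕ∞) f M)
    (ha : ∀ F : Set (Fin d → ℝ), IsFace M F → polyDim F = ℓ → ∀ x ∈ F, f x ∈ Edir M x)
    (hb : ∀ N : Set (Fin d → ℝ), IsFace M N → ℓ < polyDim N →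
      f '' N ⊆ (Submodule.span ℝ
        (⋃ (F : Set (Fin d → ℝ)) (_ : IsFace M F ∧ polyDim F = ℓ ∧ F ⊆ N), f '' F) :
        Set (Fin d → ℝ))) :
    ∀ x ∈ M, f x ∈ Edir M x := by
  intro x hx
  have hN : IsFace M (smallestFace M x) := isFace_smallestFace' hx
  have hxN : x ∈ smallestFace M x := mem_smallestFace'
  rcases le_or_gt (polyDim (smallestFace M x)) ℓ with hk | hk
  · obtain ⟨G, hG, hNG, hGdim⟩ := exists_face_of_dim hM hN ℓ hk (by omega)
    exact ha G hG hGdim x (hNG hxN)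
  · have hmem := hb (smallestFace M x) hN hk ⟨x, hxN, rfl⟩
    have hspan : Submodule.span ℝ
        (⋃ (F : Set (Fin d → ℝ))
          (_ : IsFace M F ∧ polyDim F = ℓ ∧ F ⊆ smallestFace M x), f '' F)
        ≤ Edir M x := by
      refine Submodule.span_le.2 ?_
      refine iUnion₂_subset fun F hF => ?_
      rintro _ ⟨z, hz, rfl⟩
      obtain ⟨hFface, hFdim, hFsub⟩ := hF
      have h1 : f z ∈ Edir M z := ha F hFface hFdim z hz
      have h2 : Edir M z ≤ Edir M x := by
        refine AffineSubspace.direction_le (affineSpan_mono ℝ ?_)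
        exact (smallestFace_subset' hFface hz).trans hFsub
      exact h2 h1
    exact hspan hmem
end
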